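/- arXiv:2003.10034 — 2 statements merged into one kernel-verified Lean document; each statement's English description precedes it below -/
import Mathlib

section
/- Let T be the infinite rooted k-ary tree with k ≥ 2, and let w(x) = Σ_{j≥0} k^{−j} χ_{T^j}(x). Then for any fixed n ≥ 1, M^n w ≃_n w, yet there is no constant C such that w({x : Mf(x) > 1}) ≤ C ∫_T |f| M^n w dx for all f; indeed, for f_j = 3χ_{T^j}, one has w({M f_j > 1}) ≥ j while ∫_T f_j M^n w dx ≃_n 1, so the classical Fefferman–Stein inequality with any finite iterate of M fails on T. -/
open scoped ENNReal NNReal BigOperators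

noncomputable section

/-- Vertices of the infinite rooted `k`-ary tree: finite words over `Fin k`. -/
abbrev V (k : ℕ) := List (Fin k)

/-- Length of the longest common prefix (depth of the deepest common ancestor). -/
def lcpLen {k : ℕ} : List (Fin k) → List (Fin k) → ℕ
  | a :: as, b :: bs => if a = b then lcpLen as bs + 1 else 0
  | _, _ => 0

/-- Graph distance on the infinite rooted `k`-ary tree. -/
def tdist {k : ℕ} (x y : V k) : ℕ :=
  (x.length - lcpLen x y) + (y.length - lcpLen x y)

/-- Sphere of radius `r` centered at `x`. -/
def sph {k : ℕ} (x : V k) (r : ℕ) : Set (V k) := {y | tdist x y = r}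

/-- Closed ball of radius `r` centered at `x`. -/
def ball {k : ℕ} (x : V k) (r : ℕ) : Set (V k) := {y | tdist x y ≤ r}

def sphCard {k : ℕ} (x : V k) (r : ℕ) : ℝ≥0∞ := ((sph x r).ncard : ℝ≥0∞)
def ballCard {k : ℕ} (x : V k) (r : ℕ) : ℝ≥0∞ := ((ball x r).ncard : ℝ≥0∞)

/-- `w(A) = Σ_{y ∈ A} w(y)`, the weighted (counting) measure of `A`. -/
def wsum {k : ℕ} (w : V k → ℝ≥0∞) (A : Set (V k)) : ℝ≥0∞ := ∑' y : A, w ↑y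

/-- Spherical average `A_r° f (x)`. -/
def sphAvg {k : ℕ} (f : V k → ℝ≥0∞) (x : V k) (r : ℕ) : ℝ≥0∞ :=
  wsum f (sph x r) / sphCard x r

/-- Spherical maximal operator `M°`. -/
def Msph {k : ℕ} (f : V k → ℝ≥0∞) (x : V k) : ℝ≥0∞ := ⨆ r : ℕ, sphAvg f x r

/-- Centered Hardy–Littlewood maximal operator `M`. -/
def Mball {k : ℕ} (f : V k → ℝ≥0∞) (x : V k) : ℝ≥0∞ :=
  ⨆ r : ℕ, wsum f (ball x r) / ballCard x r

/-- `|f|` of a real-valued function, as an `ℝ≥0∞`-valued function. -/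
def absE {k : ℕ} (f : V k → ℝ) : V k → ℝ≥0∞ := fun y => ENNReal.ofReal |f y|

/-- `M_s w = (M(w^s))^{1/s}` (centered version). -/
def MsBall {k : ℕ} (s : ℝ) (w : V k → ℝ≥0∞) (x : V k) : ℝ≥0∞ :=
  (Mball (fun y => w y ^ s) x) ^ (1 / s)

/-- `M_s° w = (M°(w^s))^{1/s}` (spherical version). -/
def MsSph {k : ℕ} (s : ℝ) (w : V k → ℝ≥0∞) (x : V k) : ℝ≥0∞ :=
  (Msph (fun y => w y ^ s) x) ^ (1 / s)

/-- The radial weight `w(x) = k^{-depth x}`, i.e. `w = Σ_j k^{-j} χ_{T^j}`. -/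
def wm (k : ℕ) : V k → ℝ≥0∞ := fun x => (k : ℝ≥0∞) ^ (-(x.length : ℝ))

/-- `f_j = 3 χ_{T^j}`. -/
def fj (k j : ℕ) : V k → ℝ := fun x => if x.length = j then (3 : ℝ) else 0

/-- `M^n`, the `n`-fold iterate of the centered maximal operator. -/
def Mit (k n : ℕ) (w : V k → ℝ≥0∞) : V k → ℝ≥0∞ := (fun g => Mball g)^[n] w

/-!
Every ball `B(x, r)` of the tree lies in the union, over `a ≤ min r |x|`, of the subtrees of
depth `r - a` hanging off the ancestor of `x` at height `a` (away from `x` when `a > 0`). Since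
the weight of a subtree of depth `s` is `s + 1` times the weight of its root, and the root at
height `a` weighs `k ^ a w(x)`, one gets `w(B(x, r)) ≤ 4 k ^ r w(x)`; together with
`|B(x, r)| ≥ k ^ r` this gives `w ≤ M w ≤ 4 w`, hence `w ≤ M^n w ≤ 4 ^ n w`. Counting the same
pieces gives `|B(x, r)| < 3 k ^ r`, while `B(x, j - |x|)` contains the `k ^ (j - |x|)` descendants
of `x` at depth `j`, so `M f_j > 1` on the first `j + 1` levels, each of weight `1`, whereas
`∫ f_j M^n w` is comparable to `3 w(T^j) = 3`.
-/

section

variable {k : ℕ}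

section Words

lemma lcpLen_le_length_left (x y : V k) : lcpLen x y ≤ x.length := by
  induction x generalizing y with
  | nil => simp [lcpLen]
  | cons a as ih =>
    cases y with
    | nil => simp [lcpLen]
    | cons b bs => by_cases h : a = b <;> simp [lcpLen, h, ih bs]

lemma lcpLen_le_length_right (x y : V k) : lcpLen x y ≤ y.length := by
  induction x generalizing y with
  | nil => simp [lcpLen]
  | cons a as ih =>
    cases y with
    | nil => simp [lcpLen]
    | cons b bs => by_cases h : a = b <;> simp [lcpLen, h, ih bs]

lemma take_lcpLen_eq (x y : V k) : x.take (lcpLen x y) = y.take (lcpLen x y) := by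
  induction x generalizing y with
  | nil => simp [lcpLen]
  | cons a as ih =>
    cases y with
    | nil => simp [lcpLen]
    | cons b bs => by_cases h : a = b <;> simp [lcpLen, h, ih bs]

lemma getElem?_lcpLen_ne (x y : V k) {c : Fin k} (hc : x[lcpLen x y]? = some c) :
    y[lcpLen x y]? ≠ some c := by
  induction x generalizing y with
  | nil => simp [lcpLen] at hc
  | cons a as ih =>
    cases y with
    | nil => simp [lcpLen]
    | cons b bs =>
      by_cases h : a = b
      · simpa [lcpLen, h] using ih bs (by simpa [lcpLen, h] using hc)
      · simp only [lcpLen, h, if_false, List.getElem?_cons_zero] at hc ⊢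
        exact fun hb => h (Option.some.inj (hc.trans hb.symm))

lemma tdist_append (x u : V k) : tdist x (x ++ u) = u.length := by
  have hlcp : lcpLen x (x ++ u) = x.length := by
    induction x with
    | nil => cases u <;> simp [lcpLen]
    | cons a as ih => simp [lcpLen, ih]
  simp [tdist, hlcp]

lemma eq_of_tdist_eq_zero {x y : V k} (h : tdist x y = 0) : x = y := by
  have hx := lcpLen_le_length_left x y
  have hy := lcpLen_le_length_right x y
  unfold tdist at h
  calc x = x.take (lcpLen x y) := (List.take_of_length_le (by omega)).symm
    _ = y.take (lcpLen x y) := take_lcpLen_eq x y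
    _ = y := List.take_of_length_le (by omega)

lemma ball_zero (x : V k) : ball x 0 = {x} := by
  ext y
  refine ⟨fun hy => (eq_of_tdist_eq_zero (Nat.le_zero.mp hy)).symm, ?_⟩
  rintro rfl
  show tdist y y ≤ 0
  simpa using (tdist_append y []).le

lemma ncard_length_eq (t : ℕ) : {u : V k | u.length = t}.ncard = k ^ t := by
  have e : {u : V k | u.length = t} ≃ List.Vector (Fin k) t :=
    Equiv.subtypeEquivRight fun _ => Iff.rfl
  rw [← Nat.card_coe_set_eq, Nat.card_congr e, Nat.card_eq_fintype_card, card_vector,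
    Fintype.card_fin]

lemma ncard_length_le_lt (hk : 2 ≤ k) (s : ℕ) :
    {u : V k | u.length ≤ s}.ncard < 2 * k ^ s := by
  have hcover :
      {u : V k | u.length ≤ s} = ⋃ i ∈ Finset.range (s + 1), {u : V k | u.length = i} := by
    ext u
    simp
  calc {u : V k | u.length ≤ s}.ncard
      ≤ ∑ i ∈ Finset.range (s + 1), {u : V k | u.length = i}.ncard :=
        hcover ▸ Finset.set_ncard_biUnion_le _ _
    _ = ∑ i ∈ Finset.range s, k ^ i + k ^ s := by simp [ncard_length_eq, Finset.sum_range_succ]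
    _ < 2 * k ^ s := by
        have := Nat.geomSum_lt hk (s := Finset.range s) (n := s) (by simp)
        omega

def headAvoiding (o : Option (Fin k)) (s : ℕ) : Set (V k) :=
  {u | u.length ≤ s ∧ ∀ c ∈ o, u.head? ≠ some c}

lemma headAvoiding_subset (o : Option (Fin k)) (s : ℕ) :
    headAvoiding o s ⊆ {u | u.length ≤ s} :=
  fun _ hu => hu.1

lemma finite_headAvoiding (o : Option (Fin k)) (s : ℕ) : (headAvoiding o s).Finite :=
  (List.finite_length_le _ s).subset (headAvoiding_subset o s)

lemma dropWhile_replicate_append {c : Fin k} (m : ℕ) {u : V k} (hu : u.head? ≠ some c) :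
    (List.replicate m c ++ u).dropWhile (· = c) = u := by
  induction m with
  | zero => cases u <;> simp_all
  | succ m ih => simpa [List.replicate_succ, List.dropWhile_cons] using ih

/-- Padding with leading `c`'s embeds `headAvoiding (some c) s` into the words of length `s`. -/
lemma ncard_headAvoiding_some_le (c : Fin k) (s : ℕ) :
    (headAvoiding (some c) s).ncard ≤ k ^ s := by
  rw [← ncard_length_eq s]
  refine Set.ncard_le_ncard_of_injOn (fun u => List.replicate (s - u.length) c ++ u)
    (fun u hu => ?_) (fun u hu v hv huv => ?_) (List.finite_length_eq _ s)
  · have := hu.1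
    simp only [Set.mem_ofPred_eq, List.length_append, List.length_replicate]
    omega
  · rw [← dropWhile_replicate_append (s - u.length) (hu.2 c rfl),
      ← dropWhile_replicate_append (s - v.length) (hv.2 c rfl)]
    exact congrArg _ huv

end Words

section Weight

lemma wm_eq_inv_pow (y : V k) : wm k y = (k : ℝ≥0∞)⁻¹ ^ y.length := by
  rw [wm, ENNReal.rpow_neg, ENNReal.rpow_natCast, ENNReal.inv_pow]

lemma wm_append (p u : V k) : wm k (p ++ u) = wm k p * wm k u := by
  simp only [wm_eq_inv_pow, List.length_append, pow_add]

lemma wm_le_pow_mul_wm (hk : k ≠ 0) {x y : V k} {a : ℕ} (h : x.length ≤ y.length + a) :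
    wm k y ≤ (k : ℝ≥0∞) ^ a * wm k x := by
  have hk0 : (k : ℝ≥0∞) ≠ 0 := Nat.cast_ne_zero.mpr hk
  have hinv : (k : ℝ≥0∞)⁻¹ ≤ 1 := ENNReal.inv_le_one.mpr (Nat.one_le_cast.mpr (by omega))
  calc wm k y = (k : ℝ≥0∞) ^ a * (k : ℝ≥0∞)⁻¹ ^ (y.length + a) := by
        rw [wm_eq_inv_pow, pow_add, mul_comm ((k : ℝ≥0∞)⁻¹ ^ _), ← mul_assoc, ← mul_pow,
          ENNReal.mul_inv_cancel hk0 (ENNReal.natCast_ne_top k), one_pow, one_mul]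
    _ ≤ (k : ℝ≥0∞) ^ a * wm k x := by
        rw [wm_eq_inv_pow]
        exact mul_le_mul_right (pow_le_pow_right_of_le_one' hinv h) _

lemma wsum_mono {f : V k → ℝ≥0∞} {A B : Set (V k)} (h : A ⊆ B) : wsum f A ≤ wsum f B :=
  ENNReal.tsum_mono_subtype f h

lemma wsum_le_wsum {f g : V k → ℝ≥0∞} (h : ∀ y, f y ≤ g y) (A : Set (V k)) :
    wsum f A ≤ wsum g A :=
  ENNReal.tsum_le_tsum fun y => h y

lemma wsum_const_mul (c : ℝ≥0∞) (f : V k → ℝ≥0∞) (A : Set (V k)) :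
    wsum (fun y => c * f y) A = c * wsum f A :=
  ENNReal.tsum_mul_left

lemma wsum_eq_ncard_mul {f : V k → ℝ≥0∞} {A : Set (V k)} (hA : A.Finite) {c : ℝ≥0∞}
    (hf : ∀ y ∈ A, f y = c) : wsum f A = A.ncard * c := by
  rw [wsum, tsum_congr fun y : A => hf y y.2, ENNReal.tsum_set_const, ← hA.cast_ncard_eq]
  simp

lemma wsum_image_append (f : V k → ℝ≥0∞) (p : V k) (A : Set (V k)) :
    wsum f ((p ++ ·) '' A) = wsum (fun u => f (p ++ u)) A :=
  tsum_image f (List.append_right_injective p).injOn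

lemma wsum_wm_length_eq (hk : k ≠ 0) (t : ℕ) : wsum (wm k) {u : V k | u.length = t} = 1 := by
  have hk0 : (k : ℝ≥0∞) ≠ 0 := Nat.cast_ne_zero.mpr hk
  rw [wsum_eq_ncard_mul (List.finite_length_eq _ t) fun y hy => by rw [wm_eq_inv_pow, hy],
    ncard_length_eq, Nat.cast_pow, ← mul_pow,
    ENNReal.mul_inv_cancel hk0 (ENNReal.natCast_ne_top k), one_pow]

lemma wsum_wm_length_le (hk : k ≠ 0) (s : ℕ) :
    wsum (wm k) {u : V k | u.length ≤ s} = s + 1 := by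
  induction s with
  | zero =>
    simpa [Nat.le_zero] using wsum_wm_length_eq hk 0
  | succ s ih =>
    have hsplit :
        {u : V k | u.length ≤ s + 1} = {u | u.length ≤ s} ∪ {u | u.length = s + 1} := by
      ext u
      simp only [Set.mem_ofPred_eq, Set.mem_union]
      omega
    have hdisj : Disjoint {u : V k | u.length ≤ s} {u | u.length = s + 1} :=
      Set.disjoint_left.mpr fun u hu hu' => by simp_all
    rw [hsplit, wsum, Summable.tsum_union_disjoint hdisj ENNReal.summable ENNReal.summable,
      ← wsum, ← wsum, ih, wsum_wm_length_eq hk]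
    push_cast
    ring

end Weight

section Balls

/-- `x.take (x.length - a)` is the ancestor of `x` at height `a`, and `x[x.length - a]?` the first
letter of the way from it back down to `x`. -/
def ballPiece (x : V k) (r a : ℕ) : Set (V k) :=
  (x.take (x.length - a) ++ ·) '' headAvoiding x[x.length - a]? (r - a)

lemma ball_subset_biUnion_ballPiece (x : V k) (r : ℕ) :
    ball x r ⊆ ⋃ a ∈ Finset.range (min r x.length + 1), ballPiece x r a := by
  intro y hy
  have hx := lcpLen_le_length_left x y
  have hy' := lcpLen_le_length_right x y
  have hr : tdist x y ≤ r := hy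
  unfold tdist at hr
  refine Set.mem_biUnion (x := x.length - lcpLen x y) (by simp; omega) ?_
  rw [ballPiece, show x.length - (x.length - lcpLen x y) = lcpLen x y by omega]
  refine ⟨y.drop (lcpLen x y), ⟨by simp; omega, fun c hc => ?_⟩, ?_⟩
  · rw [List.head?_drop]
    exact getElem?_lcpLen_ne x y hc
  · rw [take_lcpLen_eq]
    exact List.take_append_drop _ _

lemma finite_ballPiece (x : V k) (r a : ℕ) : (ballPiece x r a).Finite :=
  (finite_headAvoiding _ _).image _

lemma ncard_ballPiece (x : V k) (r a : ℕ) :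
    (ballPiece x r a).ncard = (headAvoiding x[x.length - a]? (r - a)).ncard :=
  Set.ncard_image_of_injective _ (List.append_right_injective _)

lemma ncard_ballPiece_le (x : V k) (r a : ℕ) :
    (ballPiece x r a).ncard ≤ {u : V k | u.length ≤ r - a}.ncard :=
  (ncard_ballPiece x r a).trans_le
    (Set.ncard_le_ncard (headAvoiding_subset _ _) (List.finite_length_le _ _))

lemma ncard_ballPiece_le_pow (x : V k) (r : ℕ) {a : ℕ} (ha₀ : 0 < a) (ha : a ≤ x.length) :
    (ballPiece x r a).ncard ≤ k ^ (r - a) := by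
  rw [ncard_ballPiece, List.getElem?_eq_getElem (show x.length - a < x.length by omega)]
  exact ncard_headAvoiding_some_le _ _

lemma wsum_wm_ballPiece_le (hk : k ≠ 0) (x : V k) (r a : ℕ) :
    wsum (wm k) (ballPiece x r a) ≤ ((r - a + 1) * k ^ a : ℕ) * wm k x :=
  calc wsum (wm k) (ballPiece x r a)
      = wm k (x.take (x.length - a)) *
          wsum (wm k) (headAvoiding x[x.length - a]? (r - a)) := by
        simp only [ballPiece, wsum_image_append, wm_append, wsum_const_mul]
    _ ≤ ((k : ℝ≥0∞) ^ a * wm k x) * wsum (wm k) {u : V k | u.length ≤ r - a} := by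
        gcongr
        · exact wm_le_pow_mul_wm hk (by simp; omega)
        · exact wsum_mono (headAvoiding_subset _ _)
    _ = ((r - a + 1) * k ^ a : ℕ) * wm k x := by
        rw [wsum_wm_length_le hk]
        push_cast
        ring

lemma finite_ball (x : V k) (r : ℕ) : (ball x r).Finite :=
  (List.finite_length_le _ (x.length + r)).subset fun y hy => by
    have := lcpLen_le_length_left x y
    have : tdist x y ≤ r := hy
    unfold tdist at this
    simp only [Set.mem_ofPred_eq]
    omega

lemma image_append_length_eq_subset_ball (x : V k) (r : ℕ) :
    (x ++ ·) '' {u : V k | u.length = r} ⊆ ball x r := by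
  rintro _ ⟨u, hu, rfl⟩
  exact (tdist_append x u).trans_le hu.le

lemma pow_le_ncard_ball (x : V k) (r : ℕ) : k ^ r ≤ (ball x r).ncard := by
  rw [← ncard_length_eq r, ← Set.ncard_image_of_injective _ (List.append_right_injective x)]
  exact Set.ncard_le_ncard (image_append_length_eq_subset_ball x r) (finite_ball x r)

lemma sum_range_pow_sub_succ_lt (hk : 2 ≤ k) {m r : ℕ} (hm : m ≤ r) :
    ∑ a ∈ Finset.range m, k ^ (r - (a + 1)) < k ^ r :=
  calc ∑ a ∈ Finset.range m, k ^ (r - (a + 1))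
      = ∑ a ∈ Finset.range m, k ^ (r - 1 - a) := by simp only [Nat.sub_sub, add_comm 1]
    _ ≤ ∑ a ∈ Finset.range r, k ^ (r - 1 - a) :=
        Finset.sum_le_sum_of_subset (Finset.range_subset_range.mpr hm)
    _ = ∑ a ∈ Finset.range r, k ^ a := Finset.sum_range_reflect (k ^ ·) r
    _ < k ^ r := Nat.geomSum_lt hk (by simp)

lemma ncard_ball_lt (hk : 2 ≤ k) (x : V k) (r : ℕ) : (ball x r).ncard < 3 * k ^ r := by
  set m := min r x.length
  have hfin : (⋃ a ∈ Finset.range (m + 1), ballPiece x r a).Finite :=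
    (Finset.range _).finite_toSet.biUnion fun a _ => finite_ballPiece x r a
  calc (ball x r).ncard ≤ (⋃ a ∈ Finset.range (m + 1), ballPiece x r a).ncard :=
        Set.ncard_le_ncard (ball_subset_biUnion_ballPiece x r) hfin
    _ ≤ ∑ a ∈ Finset.range (m + 1), (ballPiece x r a).ncard := Finset.set_ncard_biUnion_le _ _
    _ = ∑ a ∈ Finset.range m, (ballPiece x r (a + 1)).ncard + (ballPiece x r 0).ncard :=
        Finset.sum_range_succ' _ _
    _ ≤ ∑ a ∈ Finset.range m, k ^ (r - (a + 1)) + {u : V k | u.length ≤ r}.ncard :=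
        add_le_add (Finset.sum_le_sum fun a ha => ncard_ballPiece_le_pow x r a.succ_pos
          (by simp only [Finset.mem_range] at ha; omega)) (ncard_ballPiece_le x r 0)
    _ < k ^ r + 2 * k ^ r :=
        Nat.add_lt_add (sum_range_pow_sub_succ_lt hk (min_le_left _ _)) (ncard_length_le_lt hk r)
    _ = 3 * k ^ r := by ring

lemma sum_range_sub_add_one_mul_pow_le (hk : 2 ≤ k) (r : ℕ) :
    ∑ a ∈ Finset.range (r + 1), (r - a + 1) * k ^ a + (r + 3) ≤ 4 * k ^ r := by
  induction r with
  | zero => simp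
  | succ r ih =>
    have hshift : ∑ a ∈ Finset.range (r + 1), (r + 1 - (a + 1) + 1) * k ^ (a + 1)
        = k * ∑ a ∈ Finset.range (r + 1), (r - a + 1) * k ^ a := by
      rw [Finset.mul_sum]
      refine Finset.sum_congr rfl fun a _ => ?_
      rw [show r + 1 - (a + 1) = r - a by omega, pow_succ]
      ring
    rw [Finset.sum_range_succ', hshift, pow_succ, Nat.sub_zero, pow_zero, mul_one]
    nlinarith [Nat.mul_le_mul_left k ih, Nat.mul_le_mul_right (r + 3) hk]

lemma wsum_wm_ball_le (hk : 2 ≤ k) (x : V k) (r : ℕ) :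
    wsum (wm k) (ball x r) ≤ 4 * (k : ℝ≥0∞) ^ r * wm k x := by
  set m := min r x.length
  have hsum : ∑ a ∈ Finset.range (m + 1), (r - a + 1) * k ^ a ≤ 4 * k ^ r :=
    calc _ ≤ ∑ a ∈ Finset.range (r + 1), (r - a + 1) * k ^ a :=
          Finset.sum_le_sum_of_subset (by simp [m])
      _ ≤ 4 * k ^ r := by have := sum_range_sub_add_one_mul_pow_le hk r; omega
  calc wsum (wm k) (ball x r) ≤ ∑ a ∈ Finset.range (m + 1), wsum (wm k) (ballPiece x r a) :=
        (wsum_mono (ball_subset_biUnion_ballPiece x r)).trans (ENNReal.tsum_biUnion_le _ _ _)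
    _ ≤ ∑ a ∈ Finset.range (m + 1), ((r - a + 1) * k ^ a : ℕ) * wm k x :=
        Finset.sum_le_sum fun a _ => wsum_wm_ballPiece_le (by omega) x r a
    _ = ((∑ a ∈ Finset.range (m + 1), (r - a + 1) * k ^ a : ℕ) : ℝ≥0∞) * wm k x := by
        rw [Nat.cast_sum, Finset.sum_mul]
    _ ≤ ((4 * k ^ r : ℕ) : ℝ≥0∞) * wm k x := by gcongr
    _ = 4 * (k : ℝ≥0∞) ^ r * wm k x := by push_cast; rfl

end Balls

section Maximal

lemma le_Mball (f : V k → ℝ≥0∞) (x : V k) : f x ≤ Mball f x := by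
  calc f x = wsum f (ball x 0) / ballCard x 0 := by
        rw [ballCard, ball_zero, Set.ncard_singleton, wsum, tsum_singleton, Nat.cast_one, div_one]
    _ ≤ Mball f x := le_iSup (fun r => wsum f (ball x r) / ballCard x r) 0

lemma Mball_mono {f g : V k → ℝ≥0∞} (h : ∀ y, f y ≤ g y) (x : V k) :
    Mball f x ≤ Mball g x :=
  iSup_mono fun _ => ENNReal.div_le_div_right (wsum_le_wsum h _) _

lemma Mball_const_mul (c : ℝ≥0∞) (f : V k → ℝ≥0∞) (x : V k) :
    Mball (fun y => c * f y) x = c * Mball f x := by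
  simp only [Mball, ENNReal.mul_iSup, wsum_const_mul, mul_div_assoc]

lemma Mball_wm_le (hk : 2 ≤ k) (x : V k) : Mball (wm k) x ≤ 4 * wm k x :=
  iSup_le fun r => ENNReal.div_le_of_le_mul <|
    calc wsum (wm k) (ball x r) ≤ 4 * (k : ℝ≥0∞) ^ r * wm k x := wsum_wm_ball_le hk x r
      _ = 4 * wm k x * (k : ℝ≥0∞) ^ r := by ring
      _ ≤ 4 * wm k x * ballCard x r := by
          unfold ballCard
          gcongr
          exact_mod_cast pow_le_ncard_ball x r

lemma wm_le_Mit (n : ℕ) (x : V k) : wm k x ≤ Mit k n (wm k) x := by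
  induction n generalizing x with
  | zero => rfl
  | succ n ih =>
    rw [Mit, Function.iterate_succ_apply']
    exact (ih x).trans (le_Mball _ x)

lemma Mit_wm_le (hk : 2 ≤ k) (n : ℕ) (x : V k) :
    Mit k n (wm k) x ≤ 4 ^ n * wm k x := by
  induction n generalizing x with
  | zero => simp [Mit]
  | succ n ih =>
    rw [Mit, Function.iterate_succ_apply']
    calc Mball (Mit k n (wm k)) x ≤ Mball (fun y => 4 ^ n * wm k y) x := Mball_mono ih x
      _ = 4 ^ n * Mball (wm k) x := Mball_const_mul _ _ x
      _ ≤ 4 ^ n * (4 * wm k x) := mul_le_mul_right (Mball_wm_le hk x) _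
      _ = 4 ^ (n + 1) * wm k x := by ring

end Maximal

section TestFunctions

lemma absE_fj (j : ℕ) (y : V k) : absE (fj k j) y = if y.length = j then 3 else 0 := by
  unfold absE fj
  split_ifs <;> norm_num

/-- The ball `B(x, j - |x|)` contains the `k ^ (j - |x|)` descendants of `x` on level `j`, on which
`3 χ_{T^j}` has total mass `3 k ^ (j - |x|) > |B(x, j - |x|)|`. -/
lemma one_lt_Mball_fj (hk : 2 ≤ k) {j : ℕ} {x : V k} (hx : x.length ≤ j) :
    1 < Mball (absE (fj k j)) x := by
  set r := j - x.length
  have hball : (ballCard x r) ≠ 0 := by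
    have := pow_le_ncard_ball x r
    have : 0 < k ^ r := by positivity
    simp only [ballCard, ne_eq, Nat.cast_eq_zero]
    omega
  have hmass : 3 * (k : ℝ≥0∞) ^ r ≤ wsum (absE (fj k j)) (ball x r) :=
    calc 3 * (k : ℝ≥0∞) ^ r
        = wsum (fun u => absE (fj k j) (x ++ u)) {u : V k | u.length = r} := by
          rw [wsum_eq_ncard_mul (List.finite_length_eq _ r) fun u hu => by
            rw [absE_fj, if_pos (by simp [hu.out, r]; omega)], ncard_length_eq]
          push_cast
          ring
      _ ≤ wsum (absE (fj k j)) (ball x r) := by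
          rw [← wsum_image_append]
          exact wsum_mono (image_append_length_eq_subset_ball x r)
  refine lt_of_lt_of_le ?_ (le_iSup _ r)
  rw [ENNReal.lt_div_iff_mul_lt (Or.inl hball) (Or.inl (ENNReal.natCast_ne_top _)), one_mul]
  refine lt_of_lt_of_le ?_ hmass
  unfold ballCard
  exact_mod_cast ncard_ball_lt hk x r

lemma natCast_le_wsum_wm_one_lt_Mball_fj (hk : 2 ≤ k) (j : ℕ) :
    (j : ℝ≥0∞) ≤ wsum (wm k) {x : V k | 1 < Mball (absE (fj k j)) x} :=
  calc (j : ℝ≥0∞) ≤ j + 1 := le_self_add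
    _ = wsum (wm k) {x : V k | x.length ≤ j} := (wsum_wm_length_le (by omega) j).symm
    _ ≤ _ := wsum_mono fun _ hx => one_lt_Mball_fj hk hx

lemma tsum_absE_fj_mul (j : ℕ) (F : V k → ℝ≥0∞) :
    ∑' x : V k, absE (fj k j) x * F x = 3 * wsum F {x : V k | x.length = j} := by
  rw [wsum, tsum_subtype, ← ENNReal.tsum_mul_left]
  refine tsum_congr fun x => ?_
  by_cases h : x.length = j <;> simp [absE_fj, h]

lemma tsum_absE_fj_mul_Mit_mem_Icc (hk : 2 ≤ k) (n j : ℕ) :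
    ∑' x : V k, absE (fj k j) x * Mit k n (wm k) x ∈ Set.Icc 3 (3 * 4 ^ n) := by
  have hk₀ : k ≠ 0 := by omega
  rw [tsum_absE_fj_mul]
  constructor
  · calc (3 : ℝ≥0∞) = 3 * wsum (wm k) {x : V k | x.length = j} := by
          rw [wsum_wm_length_eq hk₀, mul_one]
      _ ≤ _ := mul_le_mul_right (wsum_le_wsum (wm_le_Mit n) _) 3
  · calc 3 * wsum (Mit k n (wm k)) {x : V k | x.length = j}
        ≤ 3 * wsum (fun y => 4 ^ n * wm k y) {x : V k | x.length = j} :=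
          mul_le_mul_right (wsum_le_wsum (Mit_wm_le hk n) _) 3
      _ = 3 * 4 ^ n := by rw [wsum_const_mul, wsum_wm_length_eq hk₀, mul_one]

end TestFunctions

end

theorem stmt9_general (k : ℕ) (hk : 2 ≤ k) (n : ℕ) :
    (∃ c C : ℝ≥0, 0 < c ∧ ∀ x : V k,
        (c : ℝ≥0∞) * wm k x ≤ Mit k n (wm k) x ∧
        Mit k n (wm k) x ≤ (C : ℝ≥0∞) * wm k x) ∧
    (∀ j : ℕ, (j : ℝ≥0∞) ≤
        wsum (wm k) {x : V k | 1 < Mball (absE (fj k j)) x}) ∧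
    (∃ c₁ c₂ : ℝ≥0, 0 < c₁ ∧ ∀ j : ℕ,
        (c₁ : ℝ≥0∞) ≤ (∑' x : V k, absE (fj k j) x * Mit k n (wm k) x) ∧
        (∑' x : V k, absE (fj k j) x * Mit k n (wm k) x) ≤ (c₂ : ℝ≥0∞)) ∧
    ¬ ∃ C : ℝ≥0, ∀ f : V k → ℝ,
        wsum (wm k) {x : V k | 1 < Mball (absE f) x} ≤
          (C : ℝ≥0∞) * ∑' x : V k, ENNReal.ofReal |f x| * Mit k n (wm k) x := by
  have hint := tsum_absE_fj_mul_Mit_mem_Icc hk n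
  refine ⟨⟨1, 4 ^ n, one_pos, fun x =>
      ⟨by simpa using wm_le_Mit n x, by simpa using Mit_wm_le hk n x⟩⟩,
    natCast_le_wsum_wm_one_lt_Mball_fj hk,
    ⟨3, 3 * 4 ^ n, by norm_num, fun j => by simpa using hint j⟩, ?_⟩
  rintro ⟨C, hC⟩
  obtain ⟨j, hj⟩ := ENNReal.exists_nat_gt (r := C * (3 * 4 ^ n)) (by finiteness)
  refine hj.not_ge ?_
  calc (j : ℝ≥0∞) ≤ wsum (wm k) {x : V k | 1 < Mball (absE (fj k j)) x} :=
        natCast_le_wsum_wm_one_lt_Mball_fj hk j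
    _ ≤ C * ∑' x : V k, absE (fj k j) x * Mit k n (wm k) x := hC (fj k j)
    _ ≤ C * (3 * 4 ^ n) := mul_le_mul_right (hint j).2 _

/-- Failure of the classical Fefferman–Stein inequality with any iterate `M^n`:
for `w = Σ_j k^{-j} χ_{T^j}` one has `M^n w ≃_n w`, yet
`w({M f_j > 1}) ≥ j` while `∫ f_j M^n w ≃_n 1` for `f_j = 3χ_{T^j}`; hence no
constant `C` satisfies `w({Mf > 1}) ≤ C ∫ |f| M^n w` for all `f`. -/
theorem stmt9 (k : ℕ) (hk : 2 ≤ k) (n : ℕ) (hn : 1 ≤ n) :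
    (∃ c C : ℝ≥0, 0 < c ∧ ∀ x : V k,
        (c : ℝ≥0∞) * wm k x ≤ Mit k n (wm k) x ∧
        Mit k n (wm k) x ≤ (C : ℝ≥0∞) * wm k x) ∧
    (∀ j : ℕ, (j : ℝ≥0∞) ≤
        wsum (wm k) {x : V k | 1 < Mball (absE (fj k j)) x}) ∧
    (∃ c₁ c₂ : ℝ≥0, 0 < c₁ ∧ ∀ j : ℕ,
        (c₁ : ℝ≥0∞) ≤ (∑' x : V k, absE (fj k j) x * Mit k n (wm k) x) ∧
        (∑' x : V k, absE (fj k j) x * Mit k n (wm k) x) ≤ (c₂ : ℝ≥0∞)) ∧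
    ¬ ∃ C : ℝ≥0, ∀ f : V k → ℝ,
        wsum (wm k) {x : V k | 1 < Mball (absE f) x} ≤
          (C : ℝ≥0∞) * ∑' x : V k, ENNReal.ofReal |f x| * Mit k n (wm k) x :=
  stmt9_general k hk n
end
end

section
/- Let T be the infinite rooted k-ary tree with k ≥ 2, 1 < p < ∞, 1 < s < ∞, and w a weight. Then (Σ_{x∈T} (Mf(x))^p w(x))^{1/p} ≤ c_s (Σ_{x∈T} |f(x)|^p M_s w(x))^{1/p}, where M_s w = (M(w^s))^{1/s} and c_s → ∞ as s → 1. -/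
open scoped ENNReal NNReal BigOperators

noncomputable section

/-!
The maximal function is dominated by the `ℓ^p`-sum of the ball averages, `(Mg)^p ≤ ∑_r (A_r g)^p`,
so it suffices to show `∑_x (A_r g)^p w ≲ (r+1)^{2p} k^{-θr} ∑_y g^p M_s w` for some `θ > 0`.

A vertex `y` of the ball `B(x, r)` is reached from `x` by `t` steps up and `v ≤ r - t` steps
down, and at most `k^v` vertices share these numbers; in particular
`k^r ≤ |B(x, r)| ≤ (r+1)^2 k^r`. Hölder's inequality against the weight `k^{θt/p}` gives
`(A_r g(x))^p ≲ k^{-r} ∑_{y ∈ B(x,r)} g(y)^p k^{-θt}`. After summing against `w` and exchanging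
`x` and `y`, the exponent `t` counts the steps down from `y` to `x`, and Hölder's inequality with
exponent `s` bounds `∑_{x ∈ B(y,r)} w(x) k^{-θv}` by `(r+1)^2 k^{(1-θ)r} M_s w(y)` when `θ s' ≤ 1`.
-/

namespace ENNReal

lemma inner_le_Lp_mul_Lq_tsum {α : Type*} {p q : ℝ} (hpq : p.HolderConjugate q)
    (f g : α → ℝ≥0∞) :
    ∑' a, f a * g a ≤ (∑' a, f a ^ p) ^ (1 / p) * (∑' a, g a ^ q) ^ (1 / q) := by
  let _ : MeasurableSpace α := ⊤
  have hmeas : ∀ h : α → ℝ≥0∞, AEMeasurable h MeasureTheory.Measure.count :=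
    fun h => (measurable_from_top (f := h)).aemeasurable
  simpa only [MeasureTheory.lintegral_count, Pi.mul_apply] using
    lintegral_mul_le_Lp_mul_Lq MeasureTheory.Measure.count hpq (hmeas f) (hmeas g)

lemma rpow_one_div_mul_rpow_one_div {s t : ℝ} (hst : s.HolderConjugate t) (x : ℝ≥0∞) :
    x ^ (1 / s) * x ^ (1 / t) = x := by
  rw [← rpow_add_of_nonneg _ _ hst.one_div_nonneg hst.symm.one_div_nonneg,
    hst.one_div_add_one_div, div_one, rpow_one]

lemma iSup_rpow_le_tsum_rpow {ι : Type*} {p : ℝ} (hp : 0 < p) (f : ι → ℝ≥0∞) :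
    (⨆ i, f i) ^ p ≤ ∑' i, f i ^ p :=
  (le_rpow_inv_iff hp).1 (iSup_le fun i => (le_rpow_inv_iff hp).2 (ENNReal.le_tsum i))

lemma tsum_comp_list_length {α : Type*} [Fintype α] (F : ℕ → ℝ≥0∞) :
    ∑' l : List α, F l.length = ∑' n, (Fintype.card α : ℝ≥0∞) ^ n * F n := by
  rw [← (List.equivSigmaTuple (α := α)).symm.tsum_eq, ENNReal.tsum_sigma']
  refine tsum_congr fun n => ?_
  simp [List.equivSigmaTuple, tsum_fintype]

lemma tsum_ite_le_eq_mul (r : ℕ) (B : ℝ≥0∞) :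
    ∑' n : ℕ, (if n ≤ r then B else 0) = ((r : ℝ≥0∞) + 1) * B := by
  rw [tsum_eq_sum (s := Finset.range (r + 1)) fun n hn => by simp_all]
  rw [Finset.sum_congr rfl fun n hn => if_pos (Nat.lt_succ_iff.mp (Finset.mem_range.mp hn))]
  simp

open Filter Asymptotics in
lemma tsum_add_one_rpow_mul_pow_ne_top (E : ℝ) {ρ : ℝ≥0∞} (hρ : ρ < 1) :
    ∑' n : ℕ, ((n : ℝ≥0∞) + 1) ^ E * ρ ^ n ≠ ⊤ := by
  lift ρ to ℝ≥0 using hρ.ne_top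
  set m := ⌈E⌉₊
  have hlin : (fun n : ℕ => (n : ℝ) + 1) =O[atTop] (fun n : ℕ => (n : ℝ)) :=
    IsBigO.of_bound 2 <| (eventually_ge_atTop 1).mono fun n hn => by
      have : (1 : ℝ) ≤ n := by exact_mod_cast hn
      simp only [Real.norm_eq_abs, abs_of_nonneg (by positivity : (0 : ℝ) ≤ n + 1),
        abs_of_nonneg (by positivity : (0 : ℝ) ≤ n)]
      linarith
  have hsum : Summable fun n : ℕ => ((n + 1) ^ m * ρ ^ n : ℝ≥0) := by
    rw [← NNReal.summable_coe]
    have hρ' : ‖(ρ : ℝ)‖ < 1 := by simpa using hρ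
    have hsum := summable_norm_mul_geometric_of_norm_lt_one (k := m) (u := fun n => (n + 1) ^ m)
      hρ' (by push_cast; exact hlin.pow m)
    have habs : ∀ n : ℕ, |(n : ℝ) + 1| = n + 1 := fun n => abs_of_pos (by positivity)
    simpa [habs] using hsum
  refine ne_top_of_le_ne_top (tsum_coe_ne_top_iff_summable.2 hsum)
    (ENNReal.tsum_le_tsum fun n => ?_)
  push_cast
  gcongr
  rw [← rpow_natCast]
  exact rpow_le_rpow_of_exponent_le le_add_self (Nat.le_ceil E)

end ENNReal

namespace KaryTree

variable {k : ℕ}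

@[simp] lemma lcpLen_nil_left (y : V k) : lcpLen [] y = 0 := by cases y <;> rfl

@[simp] lemma lcpLen_nil_right (x : V k) : lcpLen x [] = 0 := by cases x <;> rfl

@[simp] lemma lcpLen_cons_cons (a b : Fin k) (as bs : List (Fin k)) :
    lcpLen (a :: as) (b :: bs) = if a = b then lcpLen as bs + 1 else 0 := rfl

lemma lcpLen_comm (x y : V k) : lcpLen x y = lcpLen y x := by
  induction x generalizing y with
  | nil => simp
  | cons a as ih =>
    cases y with
    | nil => simp
    | cons b bs => simp [ih bs, eq_comm]

lemma lcpLen_le_length (x y : V k) : lcpLen x y ≤ x.length := by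
  induction x generalizing y with
  | nil => simp
  | cons a as ih =>
    cases y with
    | nil => simp
    | cons b bs => by_cases h : a = b <;> simp [h, ih bs]

lemma take_lcpLen (x y : V k) : x.take (lcpLen x y) = y.take (lcpLen x y) := by
  induction x generalizing y with
  | nil => simp
  | cons a as ih =>
    cases y with
    | nil => simp
    | cons b bs => by_cases h : a = b <;> simp [h, ih bs]

@[simp] lemma lcpLen_self (x : V k) : lcpLen x x = x.length := by
  induction x with
  | nil => simp
  | cons a as ih => simp [ih]

lemma lcpLen_append_right (x t : V k) : lcpLen x (x ++ t) = x.length := by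
  induction x with
  | nil => simp
  | cons a as ih => simp [ih]

/-- The number of edges from `x` up to the deepest common ancestor of `x` and `y`. -/
def upLen (x y : V k) : ℕ := x.length - lcpLen x y

lemma tdist_eq_upLen_add_upLen (x y : V k) : tdist x y = upLen x y + upLen y x := by
  rw [tdist, upLen, upLen, lcpLen_comm y x]

lemma mem_ball_comm {x y : V k} {r : ℕ} : y ∈ ball x r ↔ x ∈ ball y r := by
  simp only [ball, Set.mem_ofPred_eq, tdist_eq_upLen_add_upLen, add_comm]

lemma ball_finite (x : V k) (r : ℕ) : (ball x r).Finite := by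
  refine (List.finite_length_le (Fin k) (x.length + r)).subset fun y hy => ?_
  have := lcpLen_le_length x y
  simp only [ball, Set.mem_ofPred_eq, tdist] at hy
  simp only [Set.mem_ofPred_eq]
  omega

/-- A vertex `y` is determined by its distance up from `x` to their common ancestor and by the
path from that ancestor down to `y`. -/
lemma injective_upLen_drop (x : V k) :
    Function.Injective fun y : V k => (upLen x y, y.drop (lcpLen x y)) := by
  intro y₁ y₂ h
  simp only [Prod.mk.injEq, upLen] at h
  have hl : lcpLen x y₁ = lcpLen x y₂ := by
    have := lcpLen_le_length x y₁; have := lcpLen_le_length x y₂; omega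
  have hdrop := h.2
  rw [hl] at hdrop
  rw [← List.take_append_drop (lcpLen x y₁) y₁, ← List.take_append_drop (lcpLen x y₂) y₂,
    ← take_lcpLen, ← take_lcpLen, hl, hdrop]

lemma wsum_ball_le (x : V k) (r : ℕ) (Φ : ℕ → ℕ → ℝ≥0∞) {B : ℝ≥0∞}
    (hB : ∀ t v, t + v ≤ r → (k : ℝ≥0∞) ^ v * Φ t v ≤ B) :
    wsum (fun y => Φ (upLen x y) (upLen y x)) (ball x r) ≤ ((r : ℝ≥0∞) + 1) ^ 2 * B := by
  let Ψ : ℕ × V k → ℝ≥0∞ := fun z => if z.1 + z.2.length ≤ r then Φ z.1 z.2.length else 0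
  have hΨ : ∀ y ∈ ball x r,
      Ψ (upLen x y, y.drop (lcpLen x y)) = Φ (upLen x y) (upLen y x) := by
    intro y hy
    rw [ball, Set.mem_ofPred_eq, tdist_eq_upLen_add_upLen] at hy
    simp only [Ψ, List.length_drop, lcpLen_comm x y]
    exact if_pos hy
  calc wsum (fun y => Φ (upLen x y) (upLen y x)) (ball x r)
      = ∑' y : ball x r, Ψ (upLen x y, (y : V k).drop (lcpLen x y)) :=
        tsum_congr fun y => (hΨ y y.2).symm
    _ ≤ ∑' z, Ψ z := ENNReal.tsum_comp_le_tsum_of_injective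
        ((injective_upLen_drop x).comp Subtype.val_injective) Ψ
    _ = ∑' t, ∑' n, (k : ℝ≥0∞) ^ n * (if t + n ≤ r then Φ t n else 0) := by
        rw [ENNReal.tsum_prod (f := fun t l => Ψ (t, l))]
        exact tsum_congr fun t => by
          simpa using ENNReal.tsum_comp_list_length (α := Fin k) fun n =>
            if t + n ≤ r then Φ t n else 0
    _ ≤ ∑' t : ℕ, if t ≤ r then ∑' n : ℕ, (if n ≤ r then B else 0) else 0 := by
        refine ENNReal.tsum_le_tsum fun t => ?_
        split_ifs with ht
        · refine ENNReal.tsum_le_tsum fun n => ?_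
          by_cases htn : t + n ≤ r
          · rw [if_pos htn, if_pos (by omega)]
            exact hB t n htn
          · simp [htn]
        · simp [show ∀ n, ¬ t + n ≤ r from fun n => by omega]
    _ = ((r : ℝ≥0∞) + 1) ^ 2 * B := by
        rw [ENNReal.tsum_ite_le_eq_mul, ENNReal.tsum_ite_le_eq_mul, sq, mul_assoc]

lemma ballCard_eq_wsum_one (x : V k) (r : ℕ) : ballCard x r = wsum (fun _ => 1) (ball x r) := by
  rw [ballCard, wsum, ENNReal.tsum_set_one, ← (ball_finite x r).cast_ncard_eq]
  rfl

lemma ballCard_ne_top (x : V k) (r : ℕ) : ballCard x r ≠ ⊤ := ENNReal.natCast_ne_top _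

lemma pow_le_ballCard (x : V k) (r : ℕ) : (k : ℝ≥0∞) ^ r ≤ ballCard x r := by
  have hdesc : Set.range (fun σ : Fin r → Fin k => x ++ List.ofFn σ) ⊆ ball x r := by
    rintro - ⟨σ, rfl⟩
    simp [ball, tdist, lcpLen_append_right]
  have hinj : Function.Injective fun σ : Fin r → Fin k => x ++ List.ofFn σ :=
    fun σ τ h => List.ofFn_injective (List.append_cancel_left h)
  have hcard := Set.ncard_le_ncard hdesc (ball_finite x r)
  rw [← Set.image_univ, Set.ncard_image_of_injective _ hinj, Set.ncard_univ,
    Nat.card_eq_fintype_card, Fintype.card_fun, Fintype.card_fin, Fintype.card_fin] at hcard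
  rw [ballCard]
  exact_mod_cast hcard

lemma ballCard_ne_zero (x : V k) (r : ℕ) : ballCard x r ≠ 0 := by
  have hpos : 0 < (ball x r).ncard := (Set.ncard_pos (ball_finite x r)).2 ⟨x, by simp [ball, tdist]⟩
  rw [ballCard]
  exact_mod_cast hpos.ne'

def ballAvg (g : V k → ℝ≥0∞) (x : V k) (r : ℕ) : ℝ≥0∞ := wsum g (ball x r) / ballCard x r

lemma wsum_ball_le_ballCard_mul_Mball (w : V k → ℝ≥0∞) (x : V k) (r : ℕ) :
    wsum w (ball x r) ≤ ballCard x r * Mball w x := by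
  rw [mul_comm, ← ENNReal.div_le_iff (ballCard_ne_zero x r) (ballCard_ne_top x r)]
  exact le_iSup (ballAvg w x) r

lemma wsum_ball_rpow_upLen_le (hk : 1 ≤ k) (x : V k) (r : ℕ) {e : ℝ} (he : e ≤ 1) :
    wsum (fun y => (k : ℝ≥0∞) ^ (e * upLen x y)) (ball x r)
      ≤ ((r : ℝ≥0∞) + 1) ^ 2 * (k : ℝ≥0∞) ^ (r : ℝ) := by
  refine wsum_ball_le x r (fun t _ => (k : ℝ≥0∞) ^ (e * t)) fun t v htv => ?_
  have hk0 : (k : ℝ≥0∞) ≠ 0 := by positivity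
  rw [← ENNReal.rpow_natCast, ← ENNReal.rpow_add _ _ hk0 (ENNReal.natCast_ne_top k)]
  refine ENNReal.rpow_le_rpow_of_exponent_le (by exact_mod_cast hk) ?_
  have htv' : (t : ℝ) + v ≤ r := by exact_mod_cast htv
  nlinarith [(t.cast_nonneg : (0 : ℝ) ≤ t)]

lemma ballCard_le (hk : 1 ≤ k) (x : V k) (r : ℕ) :
    ballCard x r ≤ ((r : ℝ≥0∞) + 1) ^ 2 * (k : ℝ≥0∞) ^ (r : ℝ) := by
  simpa [← ballCard_eq_wsum_one] using wsum_ball_rpow_upLen_le hk x r zero_le_one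

lemma wsum_ball_rpow_neg_upLen_le (hk : 1 ≤ k) (x : V k) (r : ℕ) {c : ℝ} (hc : c ≤ 1) :
    wsum (fun y => (k : ℝ≥0∞) ^ (-c * upLen y x)) (ball x r)
      ≤ ((r : ℝ≥0∞) + 1) ^ 2 * ((k : ℝ≥0∞) ^ (r : ℝ) * (k : ℝ≥0∞) ^ (-c * r)) := by
  refine wsum_ball_le x r (fun _ v => (k : ℝ≥0∞) ^ (-c * v)) fun t v htv => ?_
  have hk0 : (k : ℝ≥0∞) ≠ 0 := by positivity
  rw [← ENNReal.rpow_natCast, ← ENNReal.rpow_add _ _ hk0 (ENNReal.natCast_ne_top k),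
    ← ENNReal.rpow_add _ _ hk0 (ENNReal.natCast_ne_top k)]
  refine ENNReal.rpow_le_rpow_of_exponent_le (by exact_mod_cast hk) ?_
  have hvr : (v : ℝ) ≤ r := by exact_mod_cast (by omega : v ≤ r)
  nlinarith

lemma ballAvg_rpow_le (hk : 1 ≤ k) {p q θ : ℝ} (hpq : p.HolderConjugate q) (hθ : θ * q ≤ p)
    (g : V k → ℝ≥0∞) (x : V k) (r : ℕ) :
    ballAvg g x r ^ p
      ≤ (((r : ℝ≥0∞) + 1) ^ 2) ^ (p - 1) * (k : ℝ≥0∞) ^ (-(r : ℝ))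
        * wsum (fun y => g y ^ p * (k : ℝ≥0∞) ^ (-θ * upLen x y)) (ball x r) := by
  set K : ℝ≥0∞ := (k : ℝ≥0∞)
  have hK0 : K ≠ 0 := by positivity
  have hKt : K ≠ ⊤ := ENNReal.natCast_ne_top k
  have hp := hpq.pos
  set S := wsum (fun y => g y ^ p * K ^ (-θ * upLen x y)) (ball x r)
  set R := ((r : ℝ≥0∞) + 1) ^ 2 * K ^ (r : ℝ)
  have hHolder : wsum g (ball x r) ≤ S ^ (1 / p) * R ^ (1 / q) := by
    have hsplit : wsum g (ball x r) = wsum (fun y =>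
        (g y * K ^ (-(θ / p) * upLen x y)) * K ^ (θ / p * upLen x y)) (ball x r) := by
      refine tsum_congr fun y => ?_
      dsimp only
      rw [mul_assoc, ← ENNReal.rpow_add _ _ hK0 hKt, neg_mul, neg_add_cancel, ENNReal.rpow_zero,
        mul_one]
    rw [hsplit]
    refine (ENNReal.inner_le_Lp_mul_Lq_tsum hpq _ _).trans (mul_le_mul' (le_of_eq ?_) ?_)
    · congr 2 with y
      rw [ENNReal.mul_rpow_of_nonneg _ _ hp.le, ← ENNReal.rpow_mul]
      congr 2
      field_simp
    · refine ENNReal.rpow_le_rpow ((le_of_eq (tsum_congr fun y => ?_)).trans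
        (wsum_ball_rpow_upLen_le hk x r (e := θ / p * q) ?_)) hpq.symm.one_div_nonneg
      · rw [← ENNReal.rpow_mul]
        ring_nf
        rfl
      · rwa [div_mul_eq_mul_div, div_le_one hp]
  have hdiv : ballAvg g x r ≤ K ^ (-(r : ℝ)) * wsum g (ball x r) := by
    rw [ballAvg, div_eq_mul_inv, mul_comm, ENNReal.rpow_neg, ENNReal.rpow_natCast]
    exact mul_le_mul_left (ENNReal.inv_le_inv.2 (pow_le_ballCard x r)) _
  calc ballAvg g x r ^ p
      ≤ (K ^ (-(r : ℝ)) * (S ^ (1 / p) * R ^ (1 / q))) ^ p :=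
        ENNReal.rpow_le_rpow (hdiv.trans (by gcongr)) hp.le
    _ = K ^ (-(r : ℝ) * p) * (S * R ^ (p - 1)) := by
        rw [ENNReal.mul_rpow_of_nonneg _ _ hp.le, ENNReal.mul_rpow_of_nonneg _ _ hp.le,
          ← ENNReal.rpow_mul, ← ENNReal.rpow_mul, ← ENNReal.rpow_mul, one_div_mul_cancel hp.ne',
          ENNReal.rpow_one, one_div_mul_eq_div, hpq.div_conj_eq_sub_one]
    _ = (((r : ℝ≥0∞) + 1) ^ 2) ^ (p - 1) * K ^ (-(r : ℝ)) * S := by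
        rw [ENNReal.mul_rpow_of_nonneg _ _ hpq.sub_one_pos.le, ← ENNReal.rpow_mul]
        have hK : K ^ (-(r : ℝ) * p) * K ^ ((r : ℝ) * (p - 1)) = K ^ (-(r : ℝ)) := by
          rw [← ENNReal.rpow_add _ _ hK0 hKt]
          ring_nf
        rw [← hK]
        ring

lemma wsum_ball_mul_rpow_neg_upLen_le (hk : 1 ≤ k) {s t θ : ℝ} (hst : s.HolderConjugate t)
    (hθ : θ * t ≤ 1) (w : V k → ℝ≥0∞) (x : V k) (r : ℕ) :
    wsum (fun y => w y * (k : ℝ≥0∞) ^ (-θ * upLen y x)) (ball x r)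
      ≤ ((r : ℝ≥0∞) + 1) ^ 2 * (k : ℝ≥0∞) ^ (r : ℝ) * (k : ℝ≥0∞) ^ (-θ * r) * MsBall s w x := by
  set R := ((r : ℝ≥0∞) + 1) ^ 2 * (k : ℝ≥0∞) ^ (r : ℝ)
  have hweight : wsum (fun y => ((k : ℝ≥0∞) ^ (-θ * upLen y x)) ^ t) (ball x r)
      ≤ R * (k : ℝ≥0∞) ^ (-(θ * t) * r) := by
    rw [mul_assoc, wsum]
    refine (le_of_eq (tsum_congr fun y => ?_)).trans (wsum_ball_rpow_neg_upLen_le hk x r hθ)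
    rw [← ENNReal.rpow_mul]
    ring_nf
  calc wsum (fun y => w y * (k : ℝ≥0∞) ^ (-θ * upLen y x)) (ball x r)
      ≤ (wsum (fun y => w y ^ s) (ball x r)) ^ (1 / s)
        * (wsum (fun y => ((k : ℝ≥0∞) ^ (-θ * upLen y x)) ^ t) (ball x r)) ^ (1 / t) :=
        ENNReal.inner_le_Lp_mul_Lq_tsum hst _ _
    _ ≤ (R * Mball (fun y => w y ^ s) x) ^ (1 / s)
          * (R * (k : ℝ≥0∞) ^ (-(θ * t) * r)) ^ (1 / t) := by
        refine mul_le_mul' (ENNReal.rpow_le_rpow ?_ hst.one_div_nonneg)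
          (ENNReal.rpow_le_rpow hweight hst.symm.one_div_nonneg)
        exact (wsum_ball_le_ballCard_mul_Mball _ x r).trans
          (mul_le_mul_left (ballCard_le hk x r) _)
    _ = R * (k : ℝ≥0∞) ^ (-θ * r) * MsBall s w x := by
        rw [ENNReal.mul_rpow_of_nonneg _ _ hst.one_div_nonneg,
          ENNReal.mul_rpow_of_nonneg _ _ hst.symm.one_div_nonneg, ← ENNReal.rpow_mul, MsBall]
        have hθt : -(θ * t) * r * (1 / t) = -θ * r := by field_simp [hst.symm.ne_zero]
        rw [hθt]
        calc R ^ (1 / s) * Mball (fun y => w y ^ s) x ^ (1 / s)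
              * (R ^ (1 / t) * (k : ℝ≥0∞) ^ (-θ * r))
            = (R ^ (1 / s) * R ^ (1 / t)) * (k : ℝ≥0∞) ^ (-θ * r)
              * Mball (fun y => w y ^ s) x ^ (1 / s) := by ring
          _ = _ := by rw [ENNReal.rpow_one_div_mul_rpow_one_div hst]

lemma tsum_wsum_ball_comm (G : V k → V k → ℝ≥0∞) (r : ℕ) :
    ∑' x, wsum (G x) (ball x r) = ∑' y, wsum (fun x => G x y) (ball y r) := by
  calc ∑' x, wsum (G x) (ball x r) = ∑' x, ∑' y, (ball x r).indicator (G x) y :=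
        tsum_congr fun x => tsum_subtype _ _
    _ = ∑' y, ∑' x, (ball y r).indicator (fun x => G x y) x := by
        refine ENNReal.tsum_comm.trans (tsum_congr fun y => tsum_congr fun x => ?_)
        by_cases h : y ∈ ball x r
        · rw [Set.indicator_of_mem h, Set.indicator_of_mem (mem_ball_comm.1 h)]
        · rw [Set.indicator_of_notMem h, Set.indicator_of_notMem (mt mem_ball_comm.2 h)]
    _ = ∑' y, wsum (fun x => G x y) (ball y r) := tsum_congr fun y => (tsum_subtype _ _).symm

lemma tsum_mul_wsum_ball_le (hk : 1 ≤ k) {s t θ : ℝ} (hst : s.HolderConjugate t)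
    (hθ : θ * t ≤ 1) (w h : V k → ℝ≥0∞) (r : ℕ) :
    ∑' x, w x * wsum (fun y => h y * (k : ℝ≥0∞) ^ (-θ * upLen x y)) (ball x r)
      ≤ ((r : ℝ≥0∞) + 1) ^ 2 * (k : ℝ≥0∞) ^ (r : ℝ) * (k : ℝ≥0∞) ^ (-θ * r)
        * ∑' y, h y * MsBall s w y := by
  calc ∑' x, w x * wsum (fun y => h y * (k : ℝ≥0∞) ^ (-θ * upLen x y)) (ball x r)
      = ∑' x, wsum (fun y => w x * (h y * (k : ℝ≥0∞) ^ (-θ * upLen x y))) (ball x r) :=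
        tsum_congr fun x => ENNReal.tsum_mul_left.symm
    _ = ∑' y, h y * wsum (fun x => w x * (k : ℝ≥0∞) ^ (-θ * upLen x y)) (ball y r) := by
        rw [tsum_wsum_ball_comm]
        refine tsum_congr fun y => ?_
        rw [wsum, wsum, ← ENNReal.tsum_mul_left]
        exact tsum_congr fun x => by ring
    _ ≤ ∑' y, h y * (((r : ℝ≥0∞) + 1) ^ 2 * (k : ℝ≥0∞) ^ (r : ℝ) * (k : ℝ≥0∞) ^ (-θ * r)
          * MsBall s w y) := by
        gcongr with y
        exact wsum_ball_mul_rpow_neg_upLen_le hk hst hθ w y r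
    _ = _ := by
        rw [← ENNReal.tsum_mul_left]
        exact tsum_congr fun y => by ring

lemma tsum_mul_ballAvg_rpow_le (hk : 1 ≤ k) {p q s t θ : ℝ} (hpq : p.HolderConjugate q)
    (hst : s.HolderConjugate t) (hθq : θ * q ≤ p) (hθt : θ * t ≤ 1) (w g : V k → ℝ≥0∞)
    (r : ℕ) :
    ∑' x, w x * ballAvg g x r ^ p
      ≤ (((r : ℝ≥0∞) + 1) ^ 2) ^ p * (k : ℝ≥0∞) ^ (-θ * r) * ∑' y, g y ^ p * MsBall s w y := by
  set A := ((r : ℝ≥0∞) + 1) ^ 2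
  set K := (k : ℝ≥0∞)
  have hA : A ^ (p - 1) * A = A ^ p := by
    calc A ^ (p - 1) * A = A ^ (p - 1) * A ^ (1 : ℝ) := by rw [ENNReal.rpow_one]
      _ = A ^ p := by
        rw [← ENNReal.rpow_add _ _ (by positivity) (ENNReal.pow_ne_top (by simp)), sub_add_cancel]
  have hK : K ^ (-(r : ℝ)) * K ^ (r : ℝ) = 1 := by
    rw [ENNReal.rpow_neg, ENNReal.inv_mul_cancel (by positivity)
      (ENNReal.rpow_ne_top_of_nonneg r.cast_nonneg (ENNReal.natCast_ne_top k))]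
  calc ∑' x, w x * ballAvg g x r ^ p
      ≤ ∑' x, w x * (A ^ (p - 1) * K ^ (-(r : ℝ))
          * wsum (fun y => g y ^ p * K ^ (-θ * upLen x y)) (ball x r)) :=
        ENNReal.tsum_le_tsum fun x => by gcongr; exact ballAvg_rpow_le hk hpq hθq g x r
    _ = A ^ (p - 1) * K ^ (-(r : ℝ))
          * ∑' x, w x * wsum (fun y => g y ^ p * K ^ (-θ * upLen x y)) (ball x r) := by
        rw [← ENNReal.tsum_mul_left]
        exact tsum_congr fun x => by ring
    _ ≤ A ^ (p - 1) * K ^ (-(r : ℝ))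
          * (A * K ^ (r : ℝ) * K ^ (-θ * r) * ∑' y, g y ^ p * MsBall s w y) := by
        gcongr
        exact tsum_mul_wsum_ball_le hk hst hθt w (fun y => g y ^ p) r
    _ = (A ^ (p - 1) * A) * (K ^ (-(r : ℝ)) * K ^ (r : ℝ)) * K ^ (-θ * r)
          * ∑' y, g y ^ p * MsBall s w y := by ring
    _ = A ^ p * K ^ (-θ * r) * ∑' y, g y ^ p * MsBall s w y := by rw [hA, hK, mul_one]

lemma tsum_Mball_rpow_mul_le (hk : 2 ≤ k) {p q s t θ : ℝ} (hpq : p.HolderConjugate q)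
    (hst : s.HolderConjugate t) (hθ₀ : 0 ≤ θ) (hθq : θ * q ≤ p) (hθt : θ * t ≤ 1)
    (w g : V k → ℝ≥0∞) :
    ∑' x, Mball g x ^ p * w x
      ≤ (∑' r : ℕ, ((r : ℝ≥0∞) + 1) ^ (2 * p) * ((2 : ℝ≥0∞) ^ (-θ)) ^ r)
        * ∑' y, g y ^ p * MsBall s w y := by
  have hk₁ : 1 ≤ k := by omega
  have hdecay : ∀ r : ℕ, (k : ℝ≥0∞) ^ (-θ * r) ≤ ((2 : ℝ≥0∞) ^ (-θ)) ^ r := by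
    intro r
    rw [← ENNReal.rpow_natCast, ← ENNReal.rpow_mul, neg_mul, ENNReal.rpow_neg, ENNReal.rpow_neg]
    exact ENNReal.inv_le_inv.2 (ENNReal.rpow_le_rpow (by exact_mod_cast hk) (by positivity))
  calc ∑' x, Mball g x ^ p * w x
      ≤ ∑' x, ∑' r : ℕ, w x * ballAvg g x r ^ p := by
        refine ENNReal.tsum_le_tsum fun x => ?_
        rw [mul_comm, ENNReal.tsum_mul_left]
        gcongr
        exact ENNReal.iSup_rpow_le_tsum_rpow hpq.pos (ballAvg g x)
    _ = ∑' r : ℕ, ∑' x, w x * ballAvg g x r ^ p := ENNReal.tsum_comm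
    _ ≤ ∑' r : ℕ, (((r : ℝ≥0∞) + 1) ^ 2) ^ p * (k : ℝ≥0∞) ^ (-θ * r)
          * ∑' y, g y ^ p * MsBall s w y :=
        ENNReal.tsum_le_tsum fun r => tsum_mul_ballAvg_rpow_le hk₁ hpq hst hθq hθt w g r
    _ ≤ ∑' r : ℕ, ((r : ℝ≥0∞) + 1) ^ (2 * p) * ((2 : ℝ≥0∞) ^ (-θ)) ^ r
          * ∑' y, g y ^ p * MsBall s w y := by
        refine ENNReal.tsum_le_tsum fun r => ?_
        rw [← ENNReal.rpow_two, ← ENNReal.rpow_mul]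
        gcongr
        exact hdecay r
    _ = _ := ENNReal.tsum_mul_right

end KaryTree

/-- Strong `L^p` Fefferman–Stein estimate: for `1 < p < ∞` and `1 < s < ∞`,
`(Σ (Mf)^p w)^{1/p} ≤ c_s (Σ |f|^p M_s w)^{1/p}`. -/
theorem stmt14 (p s : ℝ) (hp : 1 < p) (hs : 1 < s) :
    ∃ c : ℝ≥0, ∀ (k : ℕ), 2 ≤ k → ∀ (w : V k → ℝ≥0∞) (f : V k → ℝ),
      (∑' x : V k, (Mball (absE f) x) ^ p * w x) ^ (1 / p) ≤
        (c : ℝ≥0∞) * (∑' x : V k, (ENNReal.ofReal |f x|) ^ p * MsBall s w x) ^ (1 / p) := by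
  have hpq := Real.HolderConjugate.conjExponent hp
  have hst := Real.HolderConjugate.conjExponent hs
  -- `θ ≤ 1 / s'` forces `θ → 0`, and hence `c → ∞`, as `s → 1`.
  set θ := min (p - 1) (1 / s.conjExponent)
  have hθ₀ : 0 < θ := lt_min (by linarith) (one_div_pos.2 hst.symm.pos)
  have hθq : θ * p.conjExponent ≤ p :=
    (mul_le_mul_of_nonneg_right (min_le_left _ _) hpq.symm.pos.le).trans_eq hpq.sub_one_mul_conj
  have hθt : θ * s.conjExponent ≤ 1 := by
    calc θ * s.conjExponent ≤ 1 / s.conjExponent * s.conjExponent :=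
          mul_le_mul_of_nonneg_right (min_le_right _ _) hst.symm.pos.le
      _ = 1 := one_div_mul_cancel hst.symm.ne_zero
  set D := ∑' r : ℕ, ((r : ℝ≥0∞) + 1) ^ (2 * p) * ((2 : ℝ≥0∞) ^ (-θ)) ^ r
  have hD : D ^ (1 / p) ≠ ⊤ := ENNReal.rpow_ne_top_of_nonneg (by positivity) <|
    ENNReal.tsum_add_one_rpow_mul_pow_ne_top _ <|
      ENNReal.rpow_lt_one_of_one_lt_of_neg (by norm_num) (neg_lt_zero.2 hθ₀)
  refine ⟨(D ^ (1 / p)).toNNReal, fun k hk w f => ?_⟩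
  rw [ENNReal.coe_toNNReal hD, ← ENNReal.mul_rpow_of_nonneg _ _ (by positivity)]
  exact ENNReal.rpow_le_rpow
    (KaryTree.tsum_Mball_rpow_mul_le hk hpq hst hθ₀.le hθq hθt w (absE f)) (by positivity)
end
end
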